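/- Let n be a positive integer and define β₂(β₁) := (nβ₁ − 3 + √(3(3−nβ₁)(1+nβ₁)))/(2n) for β₁ ∈ (0, 2/n). Then β₂(β₁) = β₁ − (n/3)β₁² + O(β₁³) as β₁ → 0⁺; that is, (β₂(β₁) − β₁ + (n/3)β₁²)/β₁³ is bounded as β₁ → 0⁺. -/

import Mathlib

/-!
With `x = n β₁`, the claim is `√(3(3 - x)(1 + x)) = 3 + x - (2/3) x² + O(x³)`. Writing `b` for the
quadratic approximation, `a - b² = (4/9) x³ (3 - x)` is cubic, and `√a - b = (a - b²) / (√a + b)`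
with `√a ≥ 3` on `[0, 2]`.
-/

open Filter Topology Asymptotics

lemma Real.abs_sqrt_sub_le {a b : ℝ} (ha : 0 < a) (hb : 0 ≤ b) :
    |√a - b| ≤ |a - b ^ 2| / √a := by
  have hsa : 0 < √a := Real.sqrt_pos.mpr ha
  have hsum : 0 < √a + b := by positivity
  have hdiff : √a - b = (a - b ^ 2) / (√a + b) := by
    rw [eq_div_iff hsum.ne']
    linear_combination Real.mul_self_sqrt ha.le
  rw [hdiff, abs_div, abs_of_pos hsum]
  exact div_le_div_of_nonneg_left (abs_nonneg _) hsa (by linarith)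

lemma abs_sqrt_sub_quadratic_le {x : ℝ} (hx0 : 0 ≤ x) (hx2 : x ≤ 2) :
    |√(3 * (3 - x) * (1 + x)) - (3 + x - 2 / 3 * x ^ 2)| ≤ 4 / 9 * x ^ 3 := by
  have ha : 9 ≤ 3 * (3 - x) * (1 + x) := by nlinarith
  have hsa : 3 ≤ √(3 * (3 - x) * (1 + x)) :=
    Real.le_sqrt_of_sq_le (by linarith)
  have hb : 0 ≤ 3 + x - 2 / 3 * x ^ 2 := by nlinarith
  have hdefect : 3 * (3 - x) * (1 + x) - (3 + x - 2 / 3 * x ^ 2) ^ 2 = 4 / 9 * x ^ 3 * (3 - x) := by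
    ring
  have hx3 : 0 ≤ x ^ 3 := by positivity
  calc _ ≤ |3 * (3 - x) * (1 + x) - (3 + x - 2 / 3 * x ^ 2) ^ 2| / √(3 * (3 - x) * (1 + x)) :=
        Real.abs_sqrt_sub_le (by linarith) hb
    _ ≤ 4 / 9 * x ^ 3 * 3 / 3 := by
        rw [hdefect, abs_of_nonneg (by nlinarith)]
        gcongr
        linarith
    _ = 4 / 9 * x ^ 3 := by ring

theorem stmt_8 (n : ℕ) (hn : 0 < n)
    (β₂ : ℝ → ℝ)
    (hβ₂ : ∀ β₁ ∈ Set.Ioo (0 : ℝ) (2 / n),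
      β₂ β₁ = ((n : ℝ) * β₁ - 3 + Real.sqrt (3 * (3 - n * β₁) * (1 + n * β₁))) /
        (2 * n)) :
    (fun β₁ => β₂ β₁ - (β₁ - (n / 3) * β₁ ^ 2)) =O[𝓝[>] (0 : ℝ)]
      (fun β₁ => β₁ ^ 3) := by
  have hn' : (0 : ℝ) < n := by exact_mod_cast hn
  refine IsBigO.of_bound (2 / 9 * n ^ 2) ?_
  filter_upwards [Ioo_mem_nhdsGT (show (0 : ℝ) < 2 / n by positivity)] with β hβ
  have hx2 : n * β ≤ 2 := by
    have := (lt_div_iff₀' hn').mp hβ.2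
    linarith
  have hexpansion : β₂ β - (β - n / 3 * β ^ 2) =
      (√(3 * (3 - n * β) * (1 + n * β)) - (3 + n * β - 2 / 3 * (n * β) ^ 2)) / (2 * n) := by
    rw [hβ₂ β hβ]
    field_simp
    ring
  rw [hexpansion, Real.norm_eq_abs, Real.norm_eq_abs, abs_div, abs_of_pos (show (0 : ℝ) < 2 * n by positivity),
    abs_of_pos (pow_pos hβ.1 3), div_le_iff₀ (by positivity)]
  calc _ ≤ 4 / 9 * (n * β) ^ 3 := abs_sqrt_sub_quadratic_le (by positivity [hβ.1]) hx2
    _ = 2 / 9 * n ^ 2 * β ^ 3 * (2 * n) := by ring
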